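/- Let H be a finite-dimensional Hopf algebra with left cointegral Λ. Define β : H → H ⊗ X by β(h) = Λ_{(1)}h ⊗ S⁻¹(Λ_{(2)}), where H is the regular representation and X is the dual coadjoint representation. Then β is an H-module morphism; concretely, for all h ∈ H: h_{(1)}Λ_{(1)} S(h_{(4)}) ⊗ S⁻¹(h_{(2)} Λ_{(2)} S(h_{(3)})) = ε(h)·Λ_{(1)} ⊗ S⁻¹(Λ_{(2)}). -/

import Mathlib

open TensorProduct

/-- The three-fold iterated comultiplication `Δ³ : H → H ⊗ (H ⊗ (H ⊗ H))`. -/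
noncomputable def comul3 {k H : Type} [Field k] [Ring H] [HopfAlgebra k H] :
    H →ₗ[k] H ⊗[k] (H ⊗[k] (H ⊗[k] H)) :=
  (LinearMap.lTensor H (LinearMap.lTensor H (Coalgebra.comul (R := k) (A := H)))) ∘ₗ
    (LinearMap.lTensor H (Coalgebra.comul (R := k) (A := H))) ∘ₗ
      (Coalgebra.comul (R := k) (A := H))

/-!
Write `Δ³h = Σ Δ(h₍₁₎) ⊗ Δ(h₍₂₎)` (coassociativity). Since `Δ` is multiplicative and
`Δ ∘ S = (S ⊗ S) ∘ τ ∘ Δ`, the left-hand side before applying `id ⊗ S⁻¹` is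
`Σ Δ(h₍₁₎) Δ(Λ) Δ(S h₍₂₎) = Δ(h₍₁₎ Λ S(h₍₂₎))`. From `S Λ = Λ` the left cointegral also
satisfies `Λ S(x) = S(xΛ) = ε(x) Λ`, so `h₍₁₎ Λ S(h₍₂₎) = ε(h) Λ`.
-/

open Coalgebra HopfAlgebra WithConv

section

variable {R A : Type*} [CommSemiring R] [Semiring A] [HopfAlgebra R A]

lemma HopfAlgebra.sum_antipode_tmul_one_mul_comul {a : A} {ι : Type*} (𝓡 : Repr R a ι) :
    ∑ i ∈ 𝓡.index, (antipode R (𝓡.left i) ⊗ₜ[R] (1 : A)) * comul (𝓡.right i) = 1 ⊗ₜ[R] a := by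
  have h := sum_tmul_tmul_eq 𝓡 (fun i => ℛ R (𝓡.left i)) (fun i => ℛ R (𝓡.right i))
  apply_fun map (LinearMap.mul' R A ∘ₗ (antipode R).rTensor A) LinearMap.id ∘ₗ
    (TensorProduct.assoc R A A A).symm.toLinearMap at h
  simp only [map_sum, LinearMap.coe_comp, LinearEquiv.coe_coe, Function.comp_apply,
    assoc_symm_tmul, map_tmul, LinearMap.rTensor_tmul, LinearMap.mul'_apply, LinearMap.id_coe,
    id_eq, ← sum_tmul, sum_antipode_mul_eq_smul, smul_tmul] at h
  rw [← tmul_sum, sum_counit_smul] at h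
  simpa [← (ℛ R (𝓡.right _)).eq, Finset.mul_sum] using h.symm

lemma LinearMap.comul_left_inv :
    toConv (map (antipode R) (antipode R) ∘ₗ (TensorProduct.comm R A A).toLinearMap ∘ₗ comul) *
      toConv (comul (R := R) (A := A)) = 1 := by
  ext c
  let Θ : (A ⊗[R] A) ⊗[R] A →ₗ[R] A ⊗[R] A := lift
    ((LinearMap.mul R (A ⊗[R] A)).compl₁₂
      (map (antipode R) (antipode R) ∘ₗ (TensorProduct.comm R A A).toLinearMap) comul)
  have hcoassoc := congr(Θ ((TensorProduct.assoc R A A A).symm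
    $(sum_tmul_tmul_eq (ℛ R c) (fun i => ℛ R ((ℛ R c).left i)) (fun i => ℛ R ((ℛ R c).right i)))))
  simp only [Θ, map_sum, assoc_symm_tmul, lift.tmul, LinearMap.compl₁₂_apply,
    LinearMap.coe_comp, LinearEquiv.coe_coe, Function.comp_apply, comm_tmul, map_tmul,
    LinearMap.mul_apply'] at hcoassoc
  have factor (u v w : A) : (antipode R v ⊗ₜ[R] antipode R u) * comul w =
      (1 ⊗ₜ[R] antipode R u) * ((antipode R v ⊗ₜ[R] (1 : A)) * comul w) := by
    rw [← mul_assoc, Algebra.TensorProduct.tmul_mul_tmul, one_mul, mul_one]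
  rw [(ℛ R c).convMul_apply]
  simp only [LinearMap.comp_apply, ← (ℛ R ((ℛ R c).left _)).eq, map_sum, LinearEquiv.coe_coe,
    comm_tmul, map_tmul, Finset.sum_mul]
  rw [hcoassoc]
  simp only [factor, ← Finset.mul_sum, sum_antipode_tmul_one_mul_comul,
    Algebra.TensorProduct.tmul_mul_tmul, one_mul, ← tmul_sum,
    sum_antipode_mul_eq_algebraMap_counit]
  simp [Algebra.algebraMap_eq_smul_one, Algebra.TensorProduct.one_def]

namespace HopfAlgebra

lemma comul_comp_antipode :
    comul ∘ₗ antipode R (A := A) =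
      map (antipode R) (antipode R) ∘ₗ (TensorProduct.comm R A A).toLinearMap ∘ₗ comul :=
  congr(ofConv $(left_inv_eq_right_inv LinearMap.comul_left_inv LinearMap.comul_right_inv)).symm

lemma comul_antipode (a : A) :
    comul (antipode R a) = map (antipode R) (antipode R) (TensorProduct.comm R A A (comul a)) :=
  congr($comul_comp_antipode a)

lemma mul_antipode_eq_counit_smul {Λ : A} (hleft : ∀ x : A, x * Λ = counit (R := R) x • Λ)
    (hSΛ : antipode R Λ = Λ) (x : A) : Λ * antipode R x = counit (R := R) x • Λ :=
  calc Λ * antipode R x = antipode R (x * Λ) := by rw [antipode_mul_antidistrib, hSΛ]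
    _ = counit (R := R) x • Λ := by rw [hleft, map_smul, hSΛ]

lemma sum_mul_mul_antipode_eq_counit_smul {Λ : A}
    (hleft : ∀ x : A, x * Λ = counit (R := R) x • Λ) (hSΛ : antipode R Λ = Λ)
    {a : A} {ι : Type*} (𝓡 : Repr R a ι) :
    ∑ i ∈ 𝓡.index, 𝓡.left i * Λ * antipode R (𝓡.right i) = counit (R := R) a • Λ := by
  simp only [hleft, smul_mul_assoc, mul_antipode_eq_counit_smul hleft hSΛ, smul_smul,
    ← Finset.sum_smul]
  congr 1
  simpa only [map_sum, map_smul, smul_eq_mul] using congr(counit (R := R) $(sum_counit_smul 𝓡))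

noncomputable def sandwichAntipode (c : A ⊗[R] A) :
    (A ⊗[R] A) ⊗[R] (A ⊗[R] A) →ₗ[R] A ⊗[R] A :=
  lift ((LinearMap.mul R (A ⊗[R] A) ∘ₗ LinearMap.mulRight R c).compl₂
    (map (antipode R) (antipode R) ∘ₗ (TensorProduct.comm R A A).toLinearMap))

@[simp]
lemma sandwichAntipode_tmul (c x y : A ⊗[R] A) :
    sandwichAntipode c (x ⊗ₜ y) =
      x * c * map (antipode R) (antipode R) (TensorProduct.comm R A A y) :=
  rfl

lemma sandwichAntipode_comul_map_comul_comul {Λ : A}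
    (hleft : ∀ x : A, x * Λ = counit (R := R) x • Λ) (hSΛ : antipode R Λ = Λ) (a : A) :
    sandwichAntipode (comul Λ) (map comul comul (comul a)) =
      counit (R := R) a • comul (R := R) Λ := by
  rw [← (ℛ R a).eq]
  simp only [map_sum, map_tmul, sandwichAntipode_tmul, ← comul_antipode, ← Bialgebra.comul_mul]
  rw [← map_sum, sum_mul_mul_antipode_eq_counit_smul hleft hSΛ, map_smul]

end HopfAlgebra

end

lemma comul3_eq_assoc_map_comul_comul {k H : Type} [Field k] [Ring H] [HopfAlgebra k H] :
    comul3 (k := k) (H := H) =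
      (TensorProduct.assoc k H H (H ⊗[k] H)).toLinearMap ∘ₗ map comul comul ∘ₗ comul := by
  simp only [comul3, coassoc_simps]

theorem stmt11_general {k H : Type} [Field k] [Ring H] [HopfAlgebra k H]
    (Sinv : H →ₗ[k] H)
    (Λ : H)
    (hleft : ∀ x : H, x * Λ = Coalgebra.counit (R := k) x • Λ)
    (hSΛ : HopfAlgebra.antipode (R := k) Λ = Λ) :
    ∀ (h : H) (ι κ : Type) (t : Finset ι) (u : Finset κ)
      (h1 h2 h3 h4 : ι → H) (Λ1 Λ2 : κ → H),
      comul3 (k := k) h = ∑ i ∈ t, h1 i ⊗ₜ[k] (h2 i ⊗ₜ[k] (h3 i ⊗ₜ[k] h4 i)) →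
      Coalgebra.comul (R := k) Λ = ∑ j ∈ u, Λ1 j ⊗ₜ[k] Λ2 j →
      ∑ i ∈ t, ∑ j ∈ u,
          (h1 i * Λ1 j * HopfAlgebra.antipode (R := k) (h4 i)) ⊗ₜ[k]
            Sinv (h2 i * Λ2 j * HopfAlgebra.antipode (R := k) (h3 i))
        = Coalgebra.counit (R := k) h • ∑ j ∈ u, (Λ1 j) ⊗ₜ[k] Sinv (Λ2 j) := by
  intro h ι κ t u h1 h2 h3 h4 Λ1 Λ2 hh hΛ
  have key := congr(map LinearMap.id Sinv
    (sandwichAntipode (comul Λ) ((TensorProduct.assoc k H H (H ⊗[k] H)).symm $hh)))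
  rw [comul3_eq_assoc_map_comul_comul, LinearMap.comp_apply, LinearMap.comp_apply,
    LinearEquiv.coe_coe, LinearEquiv.symm_apply_apply,
    sandwichAntipode_comul_map_comul_comul hleft hSΛ, hΛ] at key
  simpa only [map_sum, assoc_symm_tmul, sandwichAntipode_tmul, Finset.mul_sum,
    Algebra.TensorProduct.tmul_mul_tmul, comm_tmul, map_tmul, Finset.sum_mul, LinearMap.id_coe,
    id_eq, map_smul] using key.symm

/-- Let `H` be a finite-dimensional Hopf algebra with bijective antipode (inverse `Sinv`) and
left cointegral `Λ` with `S(Λ) = Λ`. Define `β : H → H ⊗ X` by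
`β(h) = Λ₍₁₎ h ⊗ S⁻¹(Λ₍₂₎)`, where `X` is the dual coadjoint representation. Then `β` is an
`H`-module morphism; concretely, for all `h` and all Sweedler representations
`Δ³(h) = Σᵢ h₁ᵢ ⊗ h₂ᵢ ⊗ h₃ᵢ ⊗ h₄ᵢ` and `Δ(Λ) = Σⱼ Λ₁ⱼ ⊗ Λ₂ⱼ`:
`Σ_{i,j} h₁ᵢ Λ₁ⱼ S(h₄ᵢ) ⊗ S⁻¹(h₂ᵢ Λ₂ⱼ S(h₃ᵢ)) = ε(h) • Σⱼ Λ₁ⱼ ⊗ S⁻¹(Λ₂ⱼ)`. -/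
theorem stmt11 {k H : Type} [Field k] [Ring H] [HopfAlgebra k H] [FiniteDimensional k H]
    (Sinv : H →ₗ[k] H)
    (hS1 : ∀ x : H, Sinv (HopfAlgebra.antipode (R := k) x) = x)
    (hS2 : ∀ x : H, HopfAlgebra.antipode (R := k) (Sinv x) = x)
    (Λ : H)
    (hleft : ∀ x : H, x * Λ = Coalgebra.counit (R := k) x • Λ)
    (hSΛ : HopfAlgebra.antipode (R := k) Λ = Λ) :
    ∀ (h : H) (ι κ : Type) (t : Finset ι) (u : Finset κ)
      (h1 h2 h3 h4 : ι → H) (Λ1 Λ2 : κ → H),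
      comul3 (k := k) h = ∑ i ∈ t, h1 i ⊗ₜ[k] (h2 i ⊗ₜ[k] (h3 i ⊗ₜ[k] h4 i)) →
      Coalgebra.comul (R := k) Λ = ∑ j ∈ u, Λ1 j ⊗ₜ[k] Λ2 j →
      ∑ i ∈ t, ∑ j ∈ u,
          (h1 i * Λ1 j * HopfAlgebra.antipode (R := k) (h4 i)) ⊗ₜ[k]
            Sinv (h2 i * Λ2 j * HopfAlgebra.antipode (R := k) (h3 i))
        = Coalgebra.counit (R := k) h • ∑ j ∈ u, (Λ1 j) ⊗ₜ[k] Sinv (Λ2 j) :=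
  stmt11_general Sinv Λ hleft hSΛ
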